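/- arXiv:1812.00164 — 2 statements merged into one kernel-verified Lean document; each statement's English description precedes it below -/
import Mathlib

section
/- Let E be a Hilbert K(H)-module and let T, S : E → E be adjointable operators. Then T ∥ S (in the operator norm) if and only if T*T ∥ T*S and ‖T*S‖ = ‖T‖·‖S‖. -/
open scoped InnerProductSpace
open Filter Topology

/-- Two elements `x, y` of a complex normed space are *norm-parallel*, written `x ∥ y`,
if `‖x + λ • y‖ = ‖x‖ + ‖y‖` for some unimodular complex number `λ`. -/
def NormParallel {X : Type*} [SeminormedAddCommGroup X] [Module ℂ X] (x y : X) : Prop :=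
  ∃ lam : ℂ, ‖lam‖ = 1 ∧ ‖x + lam • y‖ = ‖x‖ + ‖y‖

/-- The rank-one operator `ξ ⊗ η : H →L[ℂ] H`, `ν ↦ [ν, η] ξ`, where `[·,·]` is the inner
product of `H` taken linear in the *first* variable (so `[ν, η] = ⟪η, ν⟫` in Mathlib's
convention). -/
noncomputable def rankOne {H : Type*} [NormedAddCommGroup H] [InnerProductSpace ℂ H]
    (ξ η : H) : H →L[ℂ] H :=
  (ContinuousLinearMap.toSpanSingleton ℂ ξ).comp (innerSL ℂ η)

/-- A (left) Hilbert `K(H)`-module: a complex Banach space `E` which is a left module over the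
C⋆-algebra `K(H)` of compact operators on a complex Hilbert space `H` (here compact operators
are represented as elements of `H →L[ℂ] H` satisfying `IsCompactOperator`, and `ksmul` is the
module action), equipped with a `K(H)`-valued inner product `kinner`, linear in the first
variable, satisfying `⟪a • x, y⟫ = a * ⟪x, y⟫`, `⟪x, y⟫* = ⟪y, x⟫`, `⟪x, x⟫ ≥ 0`,
`⟪x, x⟫ = 0 ↔ x = 0`, and whose norm satisfies `‖x‖ = ‖⟪x, x⟫‖ ^ (1/2)` (`E` is complete).
The field `theta x y` is the "compact" operator `θ_{x,y} : z ↦ ⟪z, y⟫ • x` (bundled as a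
continuous linear map; continuity and linearity are automatic). -/
class HilbertKHModule (H : Type*) [NormedAddCommGroup H] [InnerProductSpace ℂ H]
    [CompleteSpace H] (E : Type*) [NormedAddCommGroup E] [NormedSpace ℂ E] [CompleteSpace E]
    where
  /-- the action of (compact) operators on `E` -/
  ksmul : (H →L[ℂ] H) → E → E
  /-- the `K(H)`-valued inner product -/
  kinner : E → E → (H →L[ℂ] H)
  kinner_compact : ∀ x y : E, IsCompactOperator (kinner x y)
  kinner_add_left : ∀ x x' y : E, kinner (x + x') y = kinner x y + kinner x' y
  kinner_smul_left : ∀ (c : ℂ) (x y : E), kinner (c • x) y = c • kinner x y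
  kinner_op_smul_left : ∀ (a : H →L[ℂ] H) (x y : E), IsCompactOperator a →
    kinner (ksmul a x) y = a * kinner x y
  star_kinner : ∀ x y : E, star (kinner x y) = kinner y x
  kinner_self_pos : ∀ x : E, (kinner x x).IsPositive
  kinner_self_eq_zero : ∀ x : E, kinner x x = 0 ↔ x = 0
  norm_sq_eq : ∀ x : E, ‖x‖ ^ 2 = ‖kinner x x‖
  ksmul_add : ∀ (a : H →L[ℂ] H) (x y : E), IsCompactOperator a →
    ksmul a (x + y) = ksmul a x + ksmul a y
  add_ksmul : ∀ (a b : H →L[ℂ] H) (x : E), IsCompactOperator a → IsCompactOperator b →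
    ksmul (a + b) x = ksmul a x + ksmul b x
  mul_ksmul : ∀ (a b : H →L[ℂ] H) (x : E), IsCompactOperator a → IsCompactOperator b →
    ksmul (a * b) x = ksmul a (ksmul b x)
  ksmul_smul_comm : ∀ (c : ℂ) (a : H →L[ℂ] H) (x : E), IsCompactOperator a →
    ksmul (c • a) x = c • ksmul a x
  /-- the "compact" operator `θ_{x,y}` -/
  theta : E → E → (E →L[ℂ] E)
  theta_apply : ∀ x y z : E, theta x y z = ksmul (kinner z y) x

namespace HilbertKHModule

variable {H : Type*} [NormedAddCommGroup H] [InnerProductSpace ℂ H] [CompleteSpace H]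
variable {E : Type*} [NormedAddCommGroup E] [NormedSpace ℂ E] [CompleteSpace E]
variable [HilbertKHModule H E]

/-- `x` is a basic vector of `E` witnessed by the unit vector `ξ`, i.e. `⟪x, x⟫ = ξ ⊗ ξ`. -/
def IsBasicVector (x : E) (ξ : H) : Prop :=
  ‖ξ‖ = 1 ∧ kinner (H := H) x x = rankOne ξ ξ

/-- a bounded operator `T` on `E` is adjointable with adjoint `T'` if
`⟪T x, y⟫ = ⟪x, T' y⟫` for all `x, y`. -/
def IsAdjointPair (T T' : E →L[ℂ] E) : Prop :=
  ∀ x y : E, kinner (H := H) (T x) y = kinner x (T' y)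

/-- a bounded operator on `E` is adjointable if it has an adjoint. (Every adjointable map
`E → E` is automatically bounded and linear.) -/
def IsAdjointable (T : E →L[ℂ] E) : Prop :=
  ∃ T', IsAdjointPair (H := H) T T'

end HilbertKHModule

variable {H : Type*} [NormedAddCommGroup H] [InnerProductSpace ℂ H] [CompleteSpace H]
variable {E : Type*} [NormedAddCommGroup E] [NormedSpace ℂ E] [CompleteSpace E]
variable [HilbertKHModule H E]

open HilbertKHModule

/-! The Cauchy–Schwarz inequality `‖⟪x, y⟫‖ ≤ ‖x‖ ‖y‖` gives, for an adjointable `T` and any `R`,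
the estimate `‖R‖² ≤ ‖T* R‖ + ‖R - T‖ ‖R‖`. With `R = T + λ S` and `‖T + λ S‖ = ‖T‖ + ‖S‖` it
yields `‖T‖ (‖T‖ + ‖S‖) ≤ ‖T* T + λ T* S‖`, while `‖T* T‖ = ‖T‖²` and `‖T* S‖ ≤ ‖T‖ ‖S‖` bound the
right side by the same number, so all these inequalities are equalities. Conversely
`‖T‖ (‖T‖ + ‖S‖) = ‖T* (T + λ S)‖ ≤ ‖T‖ ‖T + λ S‖`, and one cancels `‖T‖` unless `T = 0`. -/

lemma NormParallel.of_le {X : Type*} [SeminormedAddCommGroup X] [NormedSpace ℂ X] {x y : X}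
    {lam : ℂ} (hlam : ‖lam‖ = 1) (h : ‖x‖ + ‖y‖ ≤ ‖x + lam • y‖) : NormParallel x y :=
  ⟨lam, hlam, le_antisymm ((norm_add_le _ _).trans_eq (by rw [norm_smul, hlam, one_mul])) h⟩

lemma ContinuousLinearMap.norm_sq_le_of_forall {𝕜 X Y : Type*} [NontriviallyNormedField 𝕜]
    [SeminormedAddCommGroup X] [SeminormedAddCommGroup Y] [NormedSpace 𝕜 X] [NormedSpace 𝕜 Y]
    (R : X →L[𝕜] Y) {c : ℝ} (hc : 0 ≤ c) (h : ∀ x, ‖R x‖ ^ 2 ≤ c * ‖x‖ ^ 2) :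
    ‖R‖ ^ 2 ≤ c := by
  refine (Real.le_sqrt (norm_nonneg _) hc).mp (R.opNorm_le_bound (Real.sqrt_nonneg c) fun x => ?_)
  rw [← Real.sqrt_sq (norm_nonneg x), ← Real.sqrt_mul hc]
  exact Real.le_sqrt_of_sq_le (h x)

namespace HilbertKHModule

lemma kinner_zero_left (y : E) : kinner (H := H) (0 : E) y = 0 := by
  simpa using kinner_add_left (H := H) (0 : E) 0 y

lemma kinner_zero_right (x : E) : kinner (H := H) x (0 : E) = 0 := by
  rw [← star_kinner, kinner_zero_left, star_zero]

lemma kinner_sub_left (x x' y : E) :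
    kinner (H := H) (x - x') y = kinner x y - kinner x' y := by
  rw [sub_eq_add_neg, kinner_add_left, ← neg_one_smul ℂ x', kinner_smul_left, neg_one_smul,
    sub_eq_add_neg]

lemma kinner_sub_right (x y y' : E) :
    kinner (H := H) x (y - y') = kinner x y - kinner x y' := by
  rw [← star_kinner, kinner_sub_left, star_sub, star_kinner, star_kinner]

lemma kinner_real_smul_left (r : ℝ) (x y : E) : kinner (H := H) (r • x) y = r • kinner x y := by
  rw [← Complex.coe_smul, kinner_smul_left, Complex.coe_smul]

lemma kinner_real_smul_right (r : ℝ) (x y : E) : kinner (H := H) x (r • y) = r • kinner x y := by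
  rw [← star_kinner, kinner_real_smul_left, star_smul, star_trivial, star_kinner]

lemma kinner_op_smul_right (a : H →L[ℂ] H) (x y : E) (ha : IsCompactOperator a) :
    kinner (H := H) x (ksmul a y) = kinner x y * star a := by
  rw [← star_kinner, kinner_op_smul_left a y x ha, star_mul, star_kinner]

/-- Expand `0 ≤ ⟪r x - b y, r x - b y⟫` with `r = ‖y‖²`, `b = ⟪x, y⟫`, and bound
`b ⟪y, y⟫ b* ≤ ‖y‖² b b*`. -/
lemma kinner_mul_kinner_swap_le (x y : E) :
    kinner (H := H) x y * kinner y x ≤ ‖y‖ ^ 2 • kinner x x := by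
  rcases eq_or_ne y 0 with rfl | hy
  · simp [kinner_zero_right]
  set r : ℝ := ‖y‖ ^ 2
  set b := kinner (H := H) x y
  have hb : IsCompactOperator b := kinner_compact x y
  have hr : 0 < r := by positivity
  have hyx : kinner (H := H) y x = star b := (star_kinner x y).symm
  rw [hyx]
  have hexpand : kinner (H := H) (r • x - ksmul b y) (r • x - ksmul b y)
      = r • r • kinner x x - r • (b * star b) - r • (b * star b) + b * kinner y y * star b := by
    simp only [kinner_sub_left, kinner_sub_right, kinner_real_smul_left, kinner_real_smul_right,
      kinner_op_smul_left _ _ _ hb, kinner_op_smul_right _ _ _ hb, hyx, mul_assoc,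
      smul_mul_assoc, sub_mul, smul_sub]
    abel
  have hconj : b * kinner y y * star b ≤ r • (b * star b) := by
    calc b * kinner y y * star b ≤ ‖kinner (H := H) y y‖ • (b * star b) :=
          CStarAlgebra.star_right_conjugate_le_norm_smul (kinner_self_pos y).isSelfAdjoint
      _ = r • (b * star b) := by rw [← norm_sq_eq]
  have hpos : (0 : H →L[ℂ] H) ≤ r • r • kinner x x - r • (b * star b) := by
    calc (0 : H →L[ℂ] H) ≤ kinner (H := H) (r • x - ksmul b y) (r • x - ksmul b y) :=
          (ContinuousLinearMap.nonneg_iff_isPositive _).mpr (kinner_self_pos _)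
      _ ≤ r • r • kinner x x - r • (b * star b) := by
          rw [hexpand, sub_add_eq_add_sub, sub_le_sub_iff_right]
          exact (add_le_add_right hconj _).trans_eq (sub_add_cancel _ _)
  rw [sub_nonneg] at hpos
  simpa [hr.ne'] using smul_le_smul_of_nonneg_left hpos (inv_nonneg.mpr hr.le)

lemma norm_kinner_le (x y : E) : ‖kinner (H := H) x y‖ ≤ ‖x‖ * ‖y‖ := by
  have hswap := kinner_mul_kinner_swap_le (H := H) x y
  rw [← star_kinner x y] at hswap
  have hsq : ‖kinner (H := H) x y‖ ^ 2 ≤ (‖x‖ * ‖y‖) ^ 2 := by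
    calc ‖kinner (H := H) x y‖ ^ 2 = ‖kinner (H := H) x y * star (kinner x y)‖ := by
          rw [CStarRing.norm_self_mul_star, sq]
      _ ≤ ‖‖y‖ ^ 2 • kinner (H := H) x x‖ :=
          CStarAlgebra.norm_le_norm_of_nonneg_of_le (mul_star_self_nonneg _) hswap
      _ = (‖x‖ * ‖y‖) ^ 2 := by
          rw [norm_smul, ← norm_sq_eq, Real.norm_of_nonneg (by positivity)]
          ring
  exact (pow_le_pow_iff_left₀ (norm_nonneg _) (by positivity) two_ne_zero).mp hsq

namespace IsAdjointPair

variable {T T' : E →L[ℂ] E}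

lemma symm (h : IsAdjointPair (H := H) T T') : IsAdjointPair (H := H) T' T := fun x y => by
  rw [← star_kinner y, ← h, star_kinner]

/-- Split `R x = T x + (R - T) x` in the first slot of `⟪R x, R x⟫` and move `T` across. -/
lemma norm_sq_le_norm_adjoint_mul_add (h : IsAdjointPair (H := H) T T') (R : E →L[ℂ] E) :
    ‖R‖ ^ 2 ≤ ‖T' * R‖ + ‖R - T‖ * ‖R‖ := by
  refine R.norm_sq_le_of_forall (by positivity) fun x => ?_
  calc ‖R x‖ ^ 2 = ‖kinner (H := H) (T x) (R x) + kinner ((R - T) x) (R x)‖ := by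
        rw [norm_sq_eq (H := H), ← kinner_add_left, sub_apply, add_sub_cancel]
    _ ≤ ‖kinner (H := H) x ((T' * R) x)‖ + ‖kinner (H := H) ((R - T) x) (R x)‖ := by
        rw [h]; exact norm_add_le _ _
    _ ≤ ‖x‖ * ‖(T' * R) x‖ + ‖(R - T) x‖ * ‖R x‖ :=
        add_le_add (norm_kinner_le _ _) (norm_kinner_le _ _)
    _ ≤ ‖x‖ * (‖T' * R‖ * ‖x‖) + ‖R - T‖ * ‖x‖ * (‖R‖ * ‖x‖) := by
        gcongr <;> exact ContinuousLinearMap.le_opNorm _ _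
    _ = (‖T' * R‖ + ‖R - T‖ * ‖R‖) * ‖x‖ ^ 2 := by ring

lemma norm_sq_le_norm_adjoint_mul_self (h : IsAdjointPair (H := H) T T') :
    ‖T‖ ^ 2 ≤ ‖T' * T‖ := by
  simpa using h.norm_sq_le_norm_adjoint_mul_add T

lemma norm_adjoint_le (h : IsAdjointPair (H := H) T T') : ‖T'‖ ≤ ‖T‖ := by
  rcases (norm_nonneg T').eq_or_lt with h0 | h0
  · exact h0 ▸ norm_nonneg T
  refine le_of_mul_le_mul_right ?_ h0
  calc ‖T'‖ * ‖T'‖ = ‖T'‖ ^ 2 := sq _ |>.symm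
    _ ≤ ‖T * T'‖ := h.symm.norm_sq_le_norm_adjoint_mul_self
    _ ≤ ‖T‖ * ‖T'‖ := norm_mul_le _ _

lemma norm_adjoint_mul_le (h : IsAdjointPair (H := H) T T') (S : E →L[ℂ] E) :
    ‖T' * S‖ ≤ ‖T‖ * ‖S‖ :=
  (norm_mul_le _ _).trans (by gcongr; exact h.norm_adjoint_le)

lemma norm_adjoint_mul_self (h : IsAdjointPair (H := H) T T') : ‖T' * T‖ = ‖T‖ ^ 2 :=
  le_antisymm ((h.norm_adjoint_mul_le T).trans_eq (sq _).symm) h.norm_sq_le_norm_adjoint_mul_self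

end IsAdjointPair

end HilbertKHModule

theorem statement11_general (T S T' : E →L[ℂ] E)
    (hT : IsAdjointPair (H := H) T T') :
    NormParallel T S ↔
      (NormParallel (T' * T) (T' * S) ∧ ‖T' * S‖ = ‖T‖ * ‖S‖) := by
  have hTT := hT.norm_adjoint_mul_self
  have hTS := hT.norm_adjoint_mul_le S
  have hfactor : ∀ lam : ℂ, T' * T + lam • (T' * S) = T' * (T + lam • S) := fun lam => by
    rw [mul_add, mul_smul_comm]
  constructor
  · rintro ⟨lam, hlam, hpar⟩
    have hlower : ‖T‖ * (‖T‖ + ‖S‖) ≤ ‖T' * T + lam • (T' * S)‖ := by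
      have := hT.norm_sq_le_norm_adjoint_mul_add (T + lam • S)
      rw [add_sub_cancel_left, norm_smul, hlam, one_mul, hpar, ← hfactor] at this
      linarith
    have hupper : ‖T' * T + lam • (T' * S)‖ ≤ ‖T' * T‖ + ‖T' * S‖ := by
      simpa [norm_smul, hlam] using norm_add_le (T' * T) (lam • (T' * S))
    have hnorm : ‖T' * S‖ = ‖T‖ * ‖S‖ := by linarith
    exact ⟨NormParallel.of_le hlam (by linarith), hnorm⟩
  · rintro ⟨⟨lam, hlam, hpar⟩, hnorm⟩
    refine NormParallel.of_le hlam ?_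
    rcases (norm_nonneg T).eq_or_lt with hT0 | hT0
    · simp [norm_eq_zero.mp hT0.symm, norm_smul, hlam]
    refine le_of_mul_le_mul_left ?_ hT0
    calc ‖T‖ * (‖T‖ + ‖S‖) = ‖T' * (T + lam • S)‖ := by rw [← hfactor, hpar, hTT, hnorm]; ring
      _ ≤ ‖T'‖ * ‖T + lam • S‖ := norm_mul_le _ _
      _ ≤ ‖T‖ * ‖T + lam • S‖ := by gcongr; exact hT.norm_adjoint_le

/-- For adjointable operators `T, S` on `E` (with adjoints `T*, S*`):
`T ∥ S` iff `T*T ∥ T*S` and `‖T*S‖ = ‖T‖·‖S‖`. -/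
theorem statement11 (T S T' S' : E →L[ℂ] E)
    (hT : IsAdjointPair (H := H) T T') (hS : IsAdjointPair (H := H) S S') :
    NormParallel T S ↔
      (NormParallel (T' * T) (T' * S) ∧ ‖T' * S‖ = ‖T‖ * ‖S‖) :=
  statement11_general T S T' hT
end

section
/- Let H be a complex Hilbert space and let t, s be compact operators on H such that t s* is a normal operator. Then t ∥ s in the C*-algebra K(H) of compact operators (i.e. ‖t + λs‖ = ‖t‖ + ‖s‖ for some λ ∈ ℂ with |λ| = 1) if and only if ‖t s*‖ = ‖t‖·‖s‖. -/
open scoped InnerProductSpace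

/-!
If `‖t + λ s‖ = ‖t‖ + ‖s‖`, the compact operator `t + λ s` attains its norm at a unit vector `x`,
and then so do `t` and `s`. Since `s* s x = ‖s‖² x`, this gives `‖t s* (s x)‖ = ‖t‖ ‖s‖²`, hence
`‖t s*‖ ≥ ‖t‖ ‖s‖`.

Conversely, a compact normal operator `a ≠ 0` has an eigenvalue of modulus `‖a‖`: its spectral
radius equals `‖a‖` and is attained on the spectrum, whose nonzero points are eigenvalues by the
Fredholm alternative. For a unit eigenvector `w` of `t s*` this reads
`|⟪t* w, s* w⟫| = ‖t‖ ‖s‖`, so Cauchy–Schwarz is an equality, `t* w` and `s* w` have norms `‖t‖`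
and `‖s‖`, and a suitable phase `λ` gives `‖(t + λ s)* w‖ = ‖t‖ + ‖s‖`.
-/

theorem ContinuousLinearMap.norm_apply_eq_of_norm_add_apply_eq {𝕜 E F : Type*}
    [NontriviallyNormedField 𝕜] [SeminormedAddCommGroup E] [SeminormedAddCommGroup F]
    [NormedSpace 𝕜 E] [NormedSpace 𝕜 F] {a b : E →L[𝕜] F} {x : E} (hx : ‖x‖ ≤ 1)
    (h : ‖(a + b) x‖ = ‖a‖ + ‖b‖) : ‖a x‖ = ‖a‖ ∧ ‖b x‖ = ‖b‖ := by
  have hax : ‖a x‖ ≤ ‖a‖ := a.le_of_opNorm_le_of_le le_rfl hx |>.trans_eq (mul_one _)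
  have hbx : ‖b x‖ ≤ ‖b‖ := b.le_of_opNorm_le_of_le le_rfl hx |>.trans_eq (mul_one _)
  have := norm_add_le (a x) (b x)
  rw [← add_apply, h] at this
  constructor <;> linarith

section RCLikeScalars

variable {𝕜 E F : Type*} [RCLike 𝕜] [NormedAddCommGroup E] [InnerProductSpace 𝕜 E]
  [CompleteSpace E] [NormedAddCommGroup F] [InnerProductSpace 𝕜 F] [CompleteSpace F]

theorem ContinuousLinearMap.adjoint_apply_apply_eq_of_norm_apply_eq {T : E →L[𝕜] F} {x : E}
    (h : ‖T x‖ = ‖T‖ * ‖x‖) : adjoint T (T x) = ((‖T‖ ^ 2 : ℝ) : 𝕜) • x := by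
  set a := adjoint T (T x)
  have ha : ‖a‖ ≤ ‖T‖ ^ 2 * ‖x‖ :=
    calc ‖a‖ ≤ ‖adjoint T‖ * ‖T x‖ := (adjoint T).le_opNorm _
    _ = ‖T‖ ^ 2 * ‖x‖ := by rw [LinearIsometryEquiv.norm_map, h]; ring
  have hre : RCLike.re ⟪a, ((‖T‖ ^ 2 : ℝ) : 𝕜) • x⟫_𝕜 = (‖T‖ ^ 2 * ‖x‖) ^ 2 := by
    rw [inner_smul_right, RCLike.re_ofReal_mul, adjoint_inner_left, inner_self_eq_norm_sq, h]
    ring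
  have hb : ‖((‖T‖ ^ 2 : ℝ) : 𝕜) • x‖ = ‖T‖ ^ 2 * ‖x‖ := by
    rw [norm_smul, RCLike.norm_ofReal, abs_of_nonneg (by positivity)]
  have : ‖a - ((‖T‖ ^ 2 : ℝ) : 𝕜) • x‖ ^ 2 ≤ 0 := by
    rw [norm_sub_sq (𝕜 := 𝕜), hre, hb]
    nlinarith [norm_nonneg a]
  exact sub_eq_zero.mp (norm_eq_zero.mp (by nlinarith [norm_nonneg (a - ((‖T‖ ^ 2 : ℝ) : 𝕜) • x)]))

theorem ContinuousLinearMap.norm_mul_star_eq_of_norm_apply_eq {t s : E →L[𝕜] E} {x : E}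
    (hx : ‖x‖ = 1) (ht : ‖t x‖ = ‖t‖) (hs : ‖s x‖ = ‖s‖) : ‖t * star s‖ = ‖t‖ * ‖s‖ := by
  refine le_antisymm ((norm_mul_le t (star s)).trans_eq
    (by rw [star_eq_adjoint, LinearIsometryEquiv.norm_map])) ?_
  rcases (norm_nonneg s).eq_or_lt with hs0 | hs0
  · rw [← hs0, mul_zero]
    exact norm_nonneg _
  have hstar : star s (s x) = ((‖s‖ ^ 2 : ℝ) : 𝕜) • x := by
    rw [star_eq_adjoint]
    exact adjoint_apply_apply_eq_of_norm_apply_eq (by rw [hs, hx, mul_one])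
  have := (t * star s).le_opNorm (s x)
  rw [mul_apply_eq_comp, hstar, map_smul, norm_smul, RCLike.norm_ofReal, ht, hs,
    abs_of_nonneg (by positivity)] at this
  nlinarith

theorem ContinuousLinearMap.inner_star_apply_star_apply (t s : E →L[𝕜] E) (w : E) :
    ⟪star t w, star s w⟫_𝕜 = ⟪w, (t * star s) w⟫_𝕜 := by
  rw [star_eq_adjoint t, adjoint_inner_left, mul_apply_eq_comp]

end RCLikeScalars

theorem normParallel_zero_left {X : Type*} [SeminormedAddCommGroup X] [Module ℂ X] (y : X) :
    NormParallel 0 y := ⟨1, by simp, by simp⟩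

theorem normParallel_zero_right {X : Type*} [SeminormedAddCommGroup X] [Module ℂ X] (x : X) :
    NormParallel x 0 := ⟨1, by simp, by simp⟩

section ComplexScalars

variable {H : Type*} [NormedAddCommGroup H] [InnerProductSpace ℂ H] [CompleteSpace H]

theorem IsCompactOperator.exists_unit_eigenvector_norm_eigenvalue_eq {T : H →L[ℂ] H}
    (hT : IsCompactOperator T) [IsStarNormal T] (hT0 : T ≠ 0) :
    ∃ (w : H) (μ : ℂ), ‖w‖ = 1 ∧ T w = μ • w ∧ ‖μ‖ = ‖T‖ := by
  have : Nontrivial (H →L[ℂ] H) := nontrivial_of_ne T 0 hT0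
  obtain ⟨μ, hμσ, hμr⟩ := spectrum.exists_nnnorm_eq_spectralRadius T
  rw [IsStarNormal.spectralRadius_eq_nnnorm, ENNReal.coe_inj] at hμr
  have hμ : ‖μ‖ = ‖T‖ := congrArg NNReal.toReal hμr
  have hμ0 : μ ≠ 0 := by
    rintro rfl
    exact hT0 (norm_eq_zero.mp (by simpa using hμ.symm))
  obtain ⟨v, hv⟩ := ((hT.hasEigenvalue_iff_mem_spectrum hμ0).mpr hμσ).exists_hasEigenvector
  have hv0 : v ≠ 0 := hv.2
  refine ⟨(‖v‖⁻¹ : ℂ) • v, μ, norm_smul_inv_norm hv0, ?_, hμ⟩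
  rw [map_smul, show T v = μ • v from hv.apply_eq_smul, smul_comm]

theorem IsCompactOperator.exists_norm_apply_eq_opNorm {T : H →L[ℂ] H}
    (hT : IsCompactOperator T) (hT0 : T ≠ 0) : ∃ x : H, ‖x‖ = 1 ∧ ‖T x‖ = ‖T‖ := by
  have hTT : IsCompactOperator (star T * T) := hT.clm_comp (star T)
  have hTT0 : star T * T ≠ 0 := by
    rw [Ne, ← norm_eq_zero, CStarRing.norm_star_mul_self]
    exact mul_ne_zero (norm_ne_zero_iff.mpr hT0) (norm_ne_zero_iff.mpr hT0)
  have : IsStarNormal (star T * T) := (IsSelfAdjoint.star_mul_self T).isStarNormal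
  obtain ⟨x, μ, hx, hTx, hμ⟩ := hTT.exists_unit_eigenvector_norm_eigenvalue_eq hTT0
  have hμ_eq : (‖T x‖ : ℂ) ^ 2 = μ :=
    calc (‖T x‖ : ℂ) ^ 2 = ⟪T x, T x⟫_ℂ := (inner_self_eq_norm_sq_to_K (𝕜 := ℂ) (T x)).symm
    _ = ⟪x, (star T * T) x⟫_ℂ := by
      rw [mul_apply_eq_comp, ContinuousLinearMap.star_eq_adjoint,
        ContinuousLinearMap.adjoint_inner_right]
    _ = μ := by rw [hTx, inner_smul_right, inner_self_eq_norm_sq_to_K, hx]; simp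
  refine ⟨x, hx, ?_⟩
  have : ‖T x‖ ^ 2 = ‖T‖ ^ 2 := by
    rw [sq ‖T‖, ← CStarRing.norm_star_mul_self, ← hμ, ← hμ_eq, norm_pow, Complex.norm_real,
      norm_norm]
  exact (sq_eq_sq₀ (norm_nonneg _) (norm_nonneg _)).mp this

theorem normParallel_of_norm_inner_star_apply_eq {t s : H →L[ℂ] H} {w : H} (hw : ‖w‖ = 1)
    (h : ‖⟪star t w, star s w⟫_ℂ‖ = ‖t‖ * ‖s‖) : NormParallel t s := by
  rcases eq_or_ne t 0 with rfl | ht0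
  · exact normParallel_zero_left s
  rcases eq_or_ne s 0 with rfl | hs0
  · exact normParallel_zero_right t
  set u := star t w
  set v := star s w
  set z := ⟪u, v⟫_ℂ
  have htpos : 0 < ‖t‖ := norm_pos_iff.mpr ht0
  have hspos : 0 < ‖s‖ := norm_pos_iff.mpr hs0
  have hu : ‖u‖ ≤ ‖t‖ := ((star t).le_opNorm w).trans_eq (by rw [norm_star, hw, mul_one])
  have hv : ‖v‖ ≤ ‖s‖ := ((star s).le_opNorm w).trans_eq (by rw [norm_star, hw, mul_one])
  have hz : ‖z‖ ≤ ‖u‖ * ‖v‖ := norm_inner_le_norm u v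
  have hut : ‖u‖ = ‖t‖ := by nlinarith [norm_nonneg u, norm_nonneg v]
  have hvs : ‖v‖ = ‖s‖ := by nlinarith [norm_nonneg u, norm_nonneg v]
  have hz0 : (‖z‖ : ℂ) ≠ 0 := by rw [h]; exact_mod_cast (mul_pos htpos hspos).ne'
  -- the phase `z / ‖z‖` turns the cross term of `‖u + conj λ • v‖ ^ 2` into `‖z‖`
  set lam : ℂ := z / ‖z‖
  have hlam : ‖lam‖ = 1 := by
    rw [norm_div, Complex.norm_real, norm_norm, div_self (by exact_mod_cast hz0)]
  have hcross : RCLike.re ⟪u, star lam • v⟫_ℂ = ‖t‖ * ‖s‖ := by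
    have : star lam * z = ‖z‖ := by
      rw [star_div₀, Complex.star_def, Complex.conj_ofReal, div_mul_eq_mul_div, Complex.conj_mul',
        sq, mul_div_assoc, div_self hz0, mul_one]
    rw [inner_smul_right, this, ← h]
    exact Complex.ofReal_re _
  have hstar : star (t + lam • s) w = u + star lam • v := by
    rw [star_add, star_smul]; rfl
  refine ⟨lam, hlam, le_antisymm ?_ ?_⟩
  · exact (norm_add_le _ _).trans_eq (by rw [norm_smul, hlam, one_mul])
  · have hsq : ‖u + star lam • v‖ ^ 2 = (‖t‖ + ‖s‖) ^ 2 := by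
      rw [norm_add_sq (𝕜 := ℂ), hcross, norm_smul, norm_star, hlam, hut, hvs]
      ring
    calc ‖t‖ + ‖s‖ = ‖star (t + lam • s) w‖ := by
          rw [hstar, ← sq_eq_sq₀ (by positivity) (norm_nonneg _), hsq]
    _ ≤ ‖star (t + lam • s)‖ :=
      ((star (t + lam • s)).le_opNorm w).trans_eq (by rw [hw, mul_one])
    _ = ‖t + lam • s‖ := norm_star _

theorem norm_mul_star_eq_of_normParallel {t s : H →L[ℂ] H} (ht : IsCompactOperator t)
    (hs : IsCompactOperator s) (hts : NormParallel t s) : ‖t * star s‖ = ‖t‖ * ‖s‖ := by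
  obtain ⟨lam, hlam, heq⟩ := hts
  rcases eq_or_ne (t + lam • s) 0 with h0 | h0
  · rw [h0, norm_zero] at heq
    rw [norm_eq_zero.mp (by linarith [norm_nonneg t, norm_nonneg s] : ‖t‖ = 0)]
    simp
  obtain ⟨x, hx, hCx⟩ := (ht.add (hs.smul lam)).exists_norm_apply_eq_opNorm h0
  have hls : ‖lam • s‖ = ‖s‖ := by rw [norm_smul, hlam, one_mul]
  obtain ⟨htx, hsx⟩ := ContinuousLinearMap.norm_apply_eq_of_norm_add_apply_eq hx.le
    (hCx.trans (by rw [heq, hls]))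
  rw [smul_apply, norm_smul, hlam, one_mul, hls] at hsx
  exact ContinuousLinearMap.norm_mul_star_eq_of_norm_apply_eq hx htx hsx

theorem normParallel_of_norm_mul_star_eq {t s : H →L[ℂ] H}
    (hA : IsCompactOperator (t * star s)) [IsStarNormal (t * star s)]
    (h : ‖t * star s‖ = ‖t‖ * ‖s‖) : NormParallel t s := by
  rcases eq_or_ne (t * star s) 0 with h0 | h0
  · rw [h0, norm_zero, eq_comm, mul_eq_zero, norm_eq_zero, norm_eq_zero] at h
    obtain rfl | rfl := h
    exacts [normParallel_zero_left s, normParallel_zero_right t]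
  obtain ⟨w, μ, hw, hAw, hμ⟩ := hA.exists_unit_eigenvector_norm_eigenvalue_eq h0
  refine normParallel_of_norm_inner_star_apply_eq hw ?_
  rw [ContinuousLinearMap.inner_star_apply_star_apply, hAw, inner_smul_right,
    inner_self_eq_norm_sq_to_K, hw]
  simpa [hμ] using h

end ComplexScalars

/-- Let `t, s` be compact operators on a complex Hilbert space `H` such
that `t s*` is normal. Then `t ∥ s` in `K(H)` iff `‖t s*‖ = ‖t‖·‖s‖`. -/
theorem statement16 {H : Type*} [NormedAddCommGroup H] [InnerProductSpace ℂ H]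
    [CompleteSpace H] (t s : H →L[ℂ] H)
    (ht : IsCompactOperator t) (hs : IsCompactOperator s)
    (hn : (t * star s) * star (t * star s) = star (t * star s) * (t * star s)) :
    NormParallel t s ↔ ‖t * star s‖ = ‖t‖ * ‖s‖ := by
  have : IsStarNormal (t * star s) := ⟨hn.symm⟩
  exact ⟨norm_mul_star_eq_of_normParallel ht hs,
    normParallel_of_norm_mul_star_eq (ht.comp_clm (star s))⟩
end
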